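/- arXiv:2412.00075 — 2 statements merged into one kernel-verified Lean document; each statement's English description precedes it below -/
import Mathlib

section
/- Let u : ℝ → ℝ be C¹ with u' eventually monotone and |u'(t)| → ∞ as t → ±∞. Then for every ε > 0 and every k ∈ ℝ, the improper integral H_u(k,l) = lim_{S,T→∞} ∫_{-S}^{T} exp(i(kt − l·u(t))) dt converges uniformly in l on the set {l : |l| ≥ ε}. -/
/-!
Van der Corput's lemma: if φ' is monotone with |φ'| ≥ c > 0 on a segment, then
‖∫ exp (i φ)‖ ≤ 2 / c there. Indeed φ' has a constant sign σ, so exp (i φ) = |φ'|⁻¹ · G' with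
G = -σ i exp (i φ) of modulus one; the weight |φ'|⁻¹ ∈ [0, 1/c] is the integral of the indicators
of its superlevel sets, which are intervals, and on each of them ∫ G' = G(end) - G(start) has
norm at most 2.

For the phase k t - l u(t) with |l| ≥ ε the derivative satisfies |k - l u'| ≥ ε |u'| - |k|, which
tends to infinity at both ends independently of l. So both tails of the integral are uniformly
small, the partial integrals are uniformly Cauchy, and they converge uniformly.
-/

open MeasureTheory Filter Complex Set Interval

section LayerCake

variable {E : Type*} [NormedAddCommGroup E] [NormedSpace ℝ E] [CompleteSpace E]
  {G G' : ℝ → E} {C : ℝ}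

theorem norm_setIntegral_deriv_le_of_convex (hG : ∀ t, HasDerivAt G (G' t) t)
    (hG' : Continuous G') (hGC : ∀ t, ‖G t‖ ≤ C) {S : Set ℝ} (hS : Convex ℝ S)
    (hSb : Bornology.IsBounded S) : ‖∫ t in S, G' t‖ ≤ 2 * C := by
  rcases S.eq_empty_or_nonempty with rfl | hne
  · simpa using (norm_nonneg _).trans (hGC 0)
  have hbelow := hSb.bddBelow
  have habove := hSb.bddAbove
  have hS_ae : S =ᵐ[volume] Icc (sInf S) (sSup S) :=
    (subset_Icc_csInf_csSup hbelow habove).eventuallyLE.antisymm <|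
      Ioo_ae_eq_Icc.symm.le.trans
        ((hS.isConnected hne).Ioo_csInf_csSup_subset hbelow habove).eventuallyLE
  rw [setIntegral_congr_set hS_ae, integral_Icc_eq_integral_Ioc,
    ← intervalIntegral.integral_of_le (csInf_le_csSup hne hbelow habove),
    intervalIntegral.integral_eq_sub_of_hasDerivAt (fun t _ ↦ hG t) (hG'.intervalIntegrable _ _)]
  calc ‖G (sSup S) - G (sInf S)‖ ≤ ‖G (sSup S)‖ + ‖G (sInf S)‖ := norm_sub_le _ _
    _ ≤ 2 * C := by linarith [hGC (sSup S), hGC (sInf S)]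

theorem norm_setIntegral_smul_deriv_le_of_quasiconcaveOn (hG : ∀ t, HasDerivAt G (G' t) t)
    (hG' : Continuous G') (hGC : ∀ t, ‖G t‖ ≤ C) {s : Set ℝ} (hsb : Bornology.IsBounded s)
    {g : ℝ → ℝ} (hg : QuasiconcaveOn ℝ s g) (hgm : Measurable g) {M : ℝ} (hM : 0 ≤ M)
    (hgM : ∀ t ∈ s, g t ∈ Icc 0 M) : ‖∫ t in s, g t • G' t‖ ≤ 2 * C * M := by
  have hs : MeasurableSet s := hg.convex.ordConnected.measurableSet
  have : IsFiniteMeasure (volume.restrict s) := isFiniteMeasure_restrict.2 hsb.measure_lt_top.ne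
  set F : ℝ → ℝ → E := fun t y ↦ (Iic (g t)).indicator (fun _ ↦ G' t) y
  have hlayer : ∀ t ∈ s, g t • G' t = ∫ y in Ioc 0 M, F t y := by
    intro t ht
    rw [setIntegral_indicator measurableSet_Iic, Ioc_inter_Iic, min_eq_right (hgM t ht).2,
      setIntegral_const, Real.volume_real_Ioc_of_le (hgM t ht).1, sub_zero]
  have hF : Integrable (Function.uncurry F)
      ((volume.restrict s).prod (volume.restrict (Ioc 0 M))) := by
    obtain ⟨B, hB⟩ : ∃ B, ∀ t ∈ closure s, ‖G' t‖ ≤ B :=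
      hsb.isCompact_closure.exists_bound_of_continuousOn hG'.continuousOn
    have hF_eq : Function.uncurry F = {p : ℝ × ℝ | p.2 ≤ g p.1}.indicator (fun p ↦ G' p.1) := by
      ext p; rfl
    refine Integrable.of_bound ?_ B ?_
    · rw [hF_eq]
      exact ((hG'.comp continuous_fst).aestronglyMeasurable).indicator
        (measurableSet_le measurable_snd (hgm.comp measurable_fst))
    · rw [Measure.prod_restrict, hF_eq]
      exact ae_restrict_of_forall_mem (hs.prod measurableSet_Ioc) fun p hp ↦
        (norm_indicator_le_norm_self _ _).trans (hB _ (subset_closure hp.1))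
  calc ‖∫ t in s, g t • G' t‖ = ‖∫ y in Ioc 0 M, ∫ t in s, F t y‖ := by
        rw [setIntegral_congr_fun hs hlayer, integral_integral_swap hF]
    _ ≤ 2 * C * volume.real (Ioc 0 M) := by
        refine norm_setIntegral_le_of_norm_le_const measure_Ioc_lt_top fun y _ ↦ ?_
        have hF_y : (fun t ↦ F t y) = {t | y ≤ g t}.indicator G' := by
          ext t; rfl
        rw [hF_y, setIntegral_indicator (measurableSet_le measurable_const hgm)]
        exact norm_setIntegral_deriv_le_of_convex hG hG' hGC (hg y) (hsb.subset inter_subset_left)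
    _ = 2 * C * M := by rw [Real.volume_real_Ioc_of_le hM, sub_zero]

end LayerCake

theorem QuasilinearOn.quasiconcaveOn_inv_abs {𝕜 E : Type*} [Semiring 𝕜] [PartialOrder 𝕜]
    [AddCommMonoid E] [SMul 𝕜 E] {s : Set E} {f : E → ℝ} (hf : QuasilinearOn 𝕜 s f)
    (hf0 : ∀ x ∈ s, f x ≠ 0) : QuasiconcaveOn 𝕜 s fun x ↦ |f x|⁻¹ := by
  intro r
  rcases le_or_gt r 0 with hr | hr
  · convert hf.1.convex using 1
    ext x
    simpa using fun _ ↦ hr.trans (by positivity)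
  · convert (hf.1 r⁻¹).inter (hf.2 (-r⁻¹)) using 1
    ext x
    simp only [mem_inter_iff]
    constructor
    · rintro ⟨hx, hrx⟩
      have := (abs_le.1 ((le_inv_comm₀ hr (abs_pos.2 (hf0 x hx))).1 hrx))
      exact ⟨⟨hx, this.2⟩, hx, this.1⟩
    · rintro ⟨⟨hx, h₁⟩, -, h₂⟩
      exact ⟨hx, (le_inv_comm₀ hr (abs_pos.2 (hf0 x hx))).2 (abs_le.2 ⟨h₂, h₁⟩)⟩

theorem norm_integral_exp_I_mul_le_of_quasilinearOn {φ φ' : ℝ → ℝ}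
    (hφ : ∀ t, HasDerivAt φ (φ' t) t) (hφ' : Continuous φ') {a b c : ℝ} (hc : 0 < c)
    (hφ'c : ∀ t ∈ uIcc a b, c ≤ |φ' t|) (hφ'q : QuasilinearOn ℝ (uIcc a b) φ') :
    ‖∫ t in a..b, exp (I * φ t)‖ ≤ 2 / c := by
  have hne : ∀ t ∈ uIcc a b, φ' t ≠ 0 := fun t ht ↦ abs_pos.1 (hc.trans_le (hφ'c t ht))
  obtain ⟨σ, hσ, hσφ'⟩ : ∃ σ : ℝ, |σ| = 1 ∧ ∀ t ∈ uIcc a b, |φ' t| = σ * φ' t := by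
    rcases isPreconnected_uIcc.eq_or_eq_neg_of_sq_eq hφ'.abs.continuousOn hφ'.continuousOn
      (fun t _ ↦ sq_abs (φ' t)) (hne _) with h | h
    · exact ⟨1, abs_one, fun t ht ↦ by simpa using h ht⟩
    · exact ⟨-1, by simp, fun t ht ↦ by simpa using h ht⟩
  set G : ℝ → ℂ := fun t ↦ -(σ * I) * exp (I * φ t)
  set G' : ℝ → ℂ := fun t ↦ (σ * φ' t : ℝ) * exp (I * φ t)
  have hG : ∀ t, HasDerivAt G (G' t) t := by
    intro t
    refine ((((hφ t).ofReal_comp.const_mul I).cexp).const_mul (-(σ * I))).congr_deriv ?_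
    simp only [G', ofReal_mul]
    linear_combination -(σ * φ' t * exp (I * φ t)) * I_sq
  have hφc : Continuous φ := continuous_iff_continuousAt.2 fun t ↦ (hφ t).continuousAt
  have hG' : Continuous G' := by simp only [G']; fun_prop
  have hGC : ∀ t, ‖G t‖ ≤ 1 := fun t ↦ by simp [G, norm_exp_I_mul_ofReal, hσ]
  have hq : QuasiconcaveOn ℝ (Ι a b) fun t ↦ |φ' t|⁻¹ :=
    Convex.quasiconcaveOn_restrict (hφ'q.quasiconcaveOn_inv_abs hne) uIoc_subset_uIcc
      (convex_Ioc _ _)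
  have hid : EqOn (fun t ↦ exp (I * φ t)) (fun t ↦ |φ' t|⁻¹ • G' t) (Ι a b) := by
    intro t ht
    show _ = |φ' t|⁻¹ • ((σ * φ' t : ℝ) * exp (I * φ t))
    rw [Complex.real_smul, ← hσφ' t (uIoc_subset_uIcc ht), ← mul_assoc, ← ofReal_mul,
      inv_mul_cancel₀ (abs_ne_zero.2 (hne t (uIoc_subset_uIcc ht))), ofReal_one, one_mul]
  calc ‖∫ t in a..b, exp (I * φ t)‖ = ‖∫ t in Ι a b, |φ' t|⁻¹ • G' t‖ := by
        rw [intervalIntegral.norm_integral_eq_norm_integral_uIoc,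
          setIntegral_congr_fun measurableSet_uIoc hid]
    _ ≤ 2 * 1 * c⁻¹ :=
        norm_setIntegral_smul_deriv_le_of_quasiconcaveOn hG hG' hGC (Metric.isBounded_Ioc _ _) hq
          (by fun_prop) (inv_nonneg.2 hc.le) fun t ht ↦
            ⟨inv_nonneg.2 (abs_nonneg _), inv_anti₀ hc (hφ'c t (uIoc_subset_uIcc ht))⟩
    _ = 2 / c := by ring

theorem exists_tendstoUniformlyOn_integral_of_tails {ι E : Type*} [NormedAddCommGroup E]
    [NormedSpace ℝ E] [CompleteSpace E] {f : ι → ℝ → E} {s : Set ι}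
    (hf : ∀ i ∈ s, Continuous (f i))
    (htop : TendstoUniformlyOn (fun (p : ℝ × ℝ) i ↦ ∫ t in p.1..p.2, f i t) 0 (atTop ×ˢ atTop) s)
    (hbot : TendstoUniformlyOn (fun (p : ℝ × ℝ) i ↦ ∫ t in p.1..p.2, f i t) 0 (atBot ×ˢ atBot) s) :
    ∃ H : ι → E,
      TendstoUniformlyOn (fun (p : ℝ × ℝ) i ↦ ∫ t in -p.1..p.2, f i t) H (atTop ×ˢ atTop) s := by
  set P : Filter (ℝ × ℝ) := atTop ×ˢ atTop
  set F : ℝ × ℝ → ι → E := fun p i ↦ ∫ t in -p.1..p.2, f i t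
  have hleft : TendstoUniformlyOn (fun (q : (ℝ × ℝ) × (ℝ × ℝ)) i ↦ ∫ t in -q.2.1..-q.1.1, f i t)
      0 (P ×ˢ P) s := fun U hU ↦
    ((tendsto_neg_atTop_atBot.comp (tendsto_fst.comp tendsto_snd)).prodMk
      (tendsto_neg_atTop_atBot.comp (tendsto_fst.comp tendsto_fst))).eventually (hbot U hU)
  have hright : TendstoUniformlyOn (fun (q : (ℝ × ℝ) × (ℝ × ℝ)) i ↦ ∫ t in q.2.2..q.1.2, f i t)
      0 (P ×ˢ P) s := fun U hU ↦
    ((tendsto_snd.comp tendsto_snd).prodMk (tendsto_snd.comp tendsto_fst)).eventually (htop U hU)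
  have hcauchy : UniformCauchySeqOn F P s := by
    rw [SeminormedAddGroup.uniformCauchySeqOn_iff_tendstoUniformlyOn_zero]
    have hdiff := hleft.sub hright
    rw [sub_zero] at hdiff
    refine hdiff.congr (Eventually.of_forall fun q i hi ↦ ?_)
    have hfi := fun a b ↦ (hf i hi).intervalIntegrable (μ := volume) a b
    simp only [F, Pi.sub_apply, neg_add_eq_sub]
    rw [intervalIntegral.integral_interval_sub_interval_comm (hfi _ _) (hfi _ _) (hfi _ _)]
  exact ⟨fun i ↦ limUnder P (F · i), hcauchy.tendstoUniformlyOn_of_tendsto fun i hi ↦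
    tendsto_nhds_limUnder (CompleteSpace.complete (hcauchy.cauchy_map hi))⟩

theorem tendstoUniformlyOn_integral_exp_phase_zero {L : Filter ℝ} [TendstoIxxClass Icc L L]
    {u : ℝ → ℝ} (hu : ContDiff ℝ 1 u)
    (hmono : ∃ J ∈ L, MonotoneOn (deriv u) J ∨ AntitoneOn (deriv u) J)
    (hproper : Tendsto (fun t ↦ |deriv u t|) L atTop) {ε : ℝ} (hε : 0 < ε) (k : ℝ) :
    TendstoUniformlyOn
      (fun (p : ℝ × ℝ) (l : ℝ) ↦ ∫ t in p.1..p.2, exp (I * (k * t - l * u t)))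
      0 (L ×ˢ L) {l | ε ≤ |l|} := by
  obtain ⟨J, hJ, hJmono⟩ := hmono
  rw [Metric.tendstoUniformlyOn_iff]
  intro δ hδ
  set c := 4 / δ
  have hc : 0 < c := by positivity
  set r := (|k| + c) / ε
  have hsub : ∀ᶠ p : ℝ × ℝ in L ×ˢ L, uIcc p.1 p.2 ⊆ J ∩ {t | r ≤ |deriv u t|} :=
    (tendsto_fst.uIcc tendsto_snd).eventually
      (eventually_smallSets_subset.2 (inter_mem hJ (hproper.eventually_ge_atTop r)))
  filter_upwards [hsub] with p hp l hl
  have hφ : ∀ t, HasDerivAt (fun t ↦ k * t - l * u t) (k - l * deriv u t) t := fun t ↦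
    (((hasDerivAt_id' t).const_mul k).sub
      ((hu.differentiable one_ne_zero t).hasDerivAt.const_mul l)).congr_deriv (by rw [mul_one])
  have hlow : ∀ t ∈ uIcc p.1 p.2, c ≤ |k - l * deriv u t| := by
    intro t ht
    have hlu : |k| + c ≤ |l| * |deriv u t| :=
      calc |k| + c = ε * r := by simp only [r]; field_simp
        _ ≤ |l| * |deriv u t| := mul_le_mul hl (hp ht).2 (by positivity) (abs_nonneg l)
    have := abs_sub_abs_le_abs_sub (l * deriv u t) k
    rw [abs_mul, abs_sub_comm] at this
    linarith
  have hq : QuasilinearOn ℝ (uIcc p.1 p.2) fun t ↦ k - l * deriv u t := by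
    have hJ' := hp.trans inter_subset_left
    have hq' : QuasilinearOn ℝ (uIcc p.1 p.2) (deriv u) :=
      hJmono.elim (fun h ↦ (h.mono hJ').quasilinearOn (convex_uIcc _ _))
        (fun h ↦ (h.mono hJ').quasilinearOn (convex_uIcc _ _))
    rcases le_total l 0 with hl0 | hl0
    · exact hq'.monotone_comp (g := fun x ↦ k - l * x) fun x y hxy ↦ by nlinarith
    · exact hq'.antitone_comp (g := fun x ↦ k - l * x) fun x y hxy ↦ by nlinarith
  have hvdc := norm_integral_exp_I_mul_le_of_quasilinearOn hφ
    (continuous_const.sub (continuous_const.mul (hu.continuous_deriv le_rfl))) hc hlow hq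
  simp only [ofReal_sub, ofReal_mul] at hvdc
  rw [Pi.zero_apply, dist_zero_left]
  calc _ ≤ 2 / c := hvdc
    _ = δ / 2 := by simp only [c]; field_simp; ring
    _ < δ := half_lt_self hδ

/-- uniform convergence of the transfer integral H_u(k,·) on {|l| ≥ ε}. -/
theorem transfer_uniform_convergence
    (u : ℝ → ℝ) (hu : ContDiff ℝ 1 u)
    (hmono : ∃ S T : ℝ,
      (MonotoneOn (deriv u) (Iic S) ∨ AntitoneOn (deriv u) (Iic S)) ∧
      (MonotoneOn (deriv u) (Ici T) ∨ AntitoneOn (deriv u) (Ici T)))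
    (hproper_top : Tendsto (fun t => |deriv u t|) atTop atTop)
    (hproper_bot : Tendsto (fun t => |deriv u t|) atBot atTop)
    (ε : ℝ) (hε : 0 < ε) (k : ℝ) :
    ∃ H : ℝ → ℂ,
      TendstoUniformlyOn
        (fun (p : ℝ × ℝ) (l : ℝ) =>
          ∫ t in (-p.1)..p.2, Complex.exp (Complex.I * (k * t - l * u t)))
        H (atTop ×ˢ atTop) {l : ℝ | ε ≤ |l|} := by
  obtain ⟨S, T, hS, hT⟩ := hmono
  refine exists_tendstoUniformlyOn_integral_of_tails (fun l _ ↦ by fun_prop) ?_ ?_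
  · exact tendstoUniformlyOn_integral_exp_phase_zero hu ⟨Ici T, Ici_mem_atTop T, hT⟩
      hproper_top hε k
  · exact tendstoUniformlyOn_integral_exp_phase_zero hu ⟨Iic S, Iic_mem_atBot S, hS⟩
      hproper_bot hε k
end

section
/- The set of Schwartz functions g on ℝ for which there exists ε > 0 with g(k) = 0 whenever |k| < ε is dense in L²(ℝ). -/
open MeasureTheory Filter Set Metric Topology
open scoped ENNReal ContDiff

/-!
Approximate `f` in `Lᵖ` by a smooth compactly supported `g`, then multiply by `1 - ψ` for a bump
function `ψ` equal to `1` near the point. The error `ψ • g` is bounded by `sup ‖g‖` and supported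
in the ball of radius `ψ.rOut`, so its `Lᵖ` norm is at most
`sup ‖g‖ · μ (closedBall c ψ.rOut) ^ (1 / p)`, which tends to `0` with the radius because `μ` has
no atoms.
-/

theorem tendsto_measure_closedBall_nhdsGT_zero {α : Type*} [MetricSpace α] [ProperSpace α]
    [MeasurableSpace α] [OpensMeasurableSpace α] {μ : Measure α} [IsFiniteMeasureOnCompacts μ]
    [NullSingletonClass μ] (c : α) :
    Tendsto (fun r => μ (closedBall c r)) (𝓝[>] 0) (𝓝 0) := by
  have h := (tendsto_measure_cthickening_of_isCompact (μ := μ)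
    (isCompact_singleton (x := c))).mono_left (nhdsWithin_le_nhds (s := Ioi (0 : ℝ)))
  rw [measure_singleton] at h
  refine h.congr' (eventually_nhdsWithin_of_forall fun r hr => ?_)
  rw [cthickening_singleton c hr.le]

theorem eLpNorm_le_measure_mul_of_support_subset {α F : Type*} [MeasurableSpace α]
    [NormedAddCommGroup F] {μ : Measure α} {p : ℝ≥0∞} {s : Set α} {f : α → F} {C : ℝ}
    (hs : Function.support f ⊆ s) (hC : ∀ x, ‖f x‖ ≤ C) :
    eLpNorm f p μ ≤ μ s ^ p.toReal⁻¹ * ENNReal.ofReal C := by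
  rw [← eLpNorm_restrict_eq_of_support_subset hs, ← Measure.restrict_apply_univ]
  exact eLpNorm_le_of_ae_bound (ae_of_all _ hC)

section

variable {E F : Type*} [NormedAddCommGroup E] [NormedSpace ℝ E] [FiniteDimensional ℝ E]
  [MeasurableSpace E] [BorelSpace E] [NormedAddCommGroup F] [NormedSpace ℝ F]
  {μ : Measure E} [IsFiniteMeasureOnCompacts μ] [NullSingletonClass μ] {p : ℝ≥0∞}

theorem exists_contDiffBump_eLpNorm_smul_lt (hp₀ : p ≠ 0) (hp : p ≠ ⊤) {g : E → F} {C : ℝ}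
    (hC : ∀ x, ‖g x‖ ≤ C) (c : E) {ε : ℝ≥0∞} (hε : 0 < ε) :
    ∃ ψ : ContDiffBump c, eLpNorm (fun x => ψ x • g x) p μ < ε := by
  have hp_pos : 0 < p.toReal⁻¹ := inv_pos.2 (ENNReal.toReal_pos hp₀ hp)
  have hbound : Tendsto (fun r => μ (closedBall c r) ^ p.toReal⁻¹ * ENNReal.ofReal C)
      (𝓝[>] 0) (𝓝 0) := by
    have h := ENNReal.Tendsto.mul_const (b := ENNReal.ofReal C)
      (((ENNReal.continuous_rpow_const (y := p.toReal⁻¹)).tendsto 0).comp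
        (tendsto_measure_closedBall_nhdsGT_zero (μ := μ) c)) (Or.inr ENNReal.ofReal_ne_top)
    rwa [ENNReal.zero_rpow_of_pos hp_pos, zero_mul] at h
  obtain ⟨r, hr_small, hr_pos⟩ :=
    ((hbound.eventually (gt_mem_nhds hε)).and self_mem_nhdsWithin).exists
  let ψ : ContDiffBump c := ⟨r / 2, r, half_pos hr_pos, half_lt_self hr_pos⟩
  refine ⟨ψ, lt_of_le_of_lt (eLpNorm_le_measure_mul_of_support_subset ?_ fun x => ?_) hr_small⟩
  · exact (Function.support_smul_subset_left _ _).trans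
      (ψ.support_eq.trans_subset ball_subset_closedBall)
  · rw [norm_smul, Real.norm_of_nonneg ψ.nonneg]
    exact (mul_le_of_le_one_left (norm_nonneg _) ψ.le_one).trans (hC x)

theorem MeasureTheory.MemLp.exists_schwartzMap_eventuallyEq_zero_eLpNorm_sub_lt (hp : p ≠ ⊤)
    (hp₁ : 1 ≤ p) {f : E → F} (hf : MemLp f p μ) (c : E) {ε : ℝ} (hε : 0 < ε) :
    ∃ g : SchwartzMap E F, (g : E → F) =ᶠ[𝓝 c] 0 ∧ eLpNorm (f - ⇑g) p μ < ENNReal.ofReal ε := by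
  obtain ⟨g, hg_supp, hg_smooth, hfg⟩ := hf.exist_eLpNorm_sub_le hp hp₁ (half_pos hε)
  obtain ⟨C, hC⟩ := hg_supp.exists_bound_of_continuous hg_smooth.continuous
  obtain ⟨ψ, hψ⟩ := exists_contDiffBump_eLpNorm_smul_lt (μ := μ)
    (zero_lt_one.trans_le hp₁).ne' hp hC c (ENNReal.ofReal_pos.2 (half_pos hε))
  let h : E → F := fun x => (1 - ψ x) • g x
  have h_supp : HasCompactSupport h := hg_supp.smul_left
  have h_smooth : ContDiff ℝ ∞ h := (contDiff_const.sub ψ.contDiff).smul hg_smooth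
  refine ⟨h_supp.toSchwartzMap h_smooth, ?_, ?_⟩
  · filter_upwards [closedBall_mem_nhds c ψ.rIn_pos] with x hx
    simp [h, ψ.one_of_mem_closedBall hx]
  · have hsplit : f - h = (f - g) + fun x => ψ x • g x := by
      ext x
      simp only [h, Pi.sub_apply, Pi.add_apply, sub_smul, one_smul]
      abel
    calc eLpNorm (f - h) p μ
        ≤ eLpNorm (f - g) p μ + eLpNorm (fun x => ψ x • g x) p μ := by
          rw [hsplit]
          exact eLpNorm_add_le
            (hf.aestronglyMeasurable.sub hg_smooth.continuous.aestronglyMeasurable)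
            ((ψ.continuous.smul hg_smooth.continuous).aestronglyMeasurable) hp₁
      _ < ENNReal.ofReal (ε / 2) + ENNReal.ofReal (ε / 2) :=
          ENNReal.add_lt_add_of_le_of_lt (ne_top_of_le_ne_top ENNReal.ofReal_ne_top hfg) hfg hψ
      _ = ENNReal.ofReal ε := by
          rw [← ENNReal.ofReal_add (half_pos hε).le (half_pos hε).le, add_halves]

end

/-- Schwartz functions vanishing on a neighbourhood of 0 are dense in L²(ℝ). -/
theorem schwartz_vanishing_near_zero_dense
    (f : ℝ → ℂ) (hf : MemLp f 2 (volume : Measure ℝ)) (δ : ℝ) (hδ : 0 < δ) :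
    ∃ g : SchwartzMap ℝ ℂ, (∃ ε > 0, ∀ k : ℝ, |k| < ε → g k = 0) ∧
      eLpNorm (f - fun t => g t) 2 (volume : Measure ℝ) < ENNReal.ofReal δ := by
  obtain ⟨g, hg_zero, hfg⟩ :=
    hf.exists_schwartzMap_eventuallyEq_zero_eLpNorm_sub_lt ENNReal.ofNat_ne_top one_le_two 0 hδ
  obtain ⟨ε, hε, hg⟩ := Metric.eventually_nhds_iff.1 hg_zero
  exact ⟨g, ⟨ε, hε, fun k hk => hg (by rwa [Real.dist_0_eq_abs])⟩, hfg⟩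
end
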